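/- arXiv:1704.01897 — 2 statements merged into one kernel-verified Lean document; each statement's English description precedes it below -/
import Mathlib

section
/- (Theorem 1, cumulative loss bound) Let the online hashing updates be W^{t+1} = W^t + τ^t A^t with A^t = 𝕩^t(𝕘^t − 𝕙^t)^T, τ^t = min{C, ℓ^t(W^t)/‖A^t‖_F^2}, ℓ^t(W) = H^t(W) − G^t(W) + √R^t, and suppose ℓ^t(W^t) ≥ √R^t, ‖A^t‖_F^2 ≤ F^2 for all t, and C ≥ √R^t/F^2 for all t. Then for any matrix U ∈ ℝ^{d×r} with ℓ^t(U) = H^t(U) − G^t(U) + √R^t ≥ 0 for all t, and any n, Σ_{t=1}^n R^t ≤ F^2 (‖U − W^1‖_F^2 + 2C Σ_{t=1}^n ℓ^t(U)). -/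
/-- Theorem 1, cumulative loss bound: for the online hashing
updates `W^{t+1} = W^t + τ^t A^t` with `A^t = 𝕩^t(𝕘^t − 𝕙^t)^T`,
`τ^t = min{C, ℓ^t(W^t)/‖A^t‖_F²}`, `ℓ^t(W) = H^t(W) − G^t(W) + √R^t`,
and assuming `ℓ^t(W^t) ≥ √R^t`, `0 < ‖A^t‖_F² ≤ F²`, `C ≥ √R^t/F²`,
and `ℓ^t(U) ≥ 0` for all `t`, we have for any `U` and any `n`:
`Σ_{t<n} R^t ≤ F²(‖U − W^1‖_F² + 2C Σ_{t<n} ℓ^t(U))`. -/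
theorem stmt_9 (d r : ℕ)
    (xi xj : ℕ → Fin d → ℝ) (hi hj gi gj : ℕ → Fin r → ℝ)
    (R : ℕ → ℝ) (hR : ∀ t, 0 ≤ R t)
    (H G ℓ : ℕ → Matrix (Fin d) (Fin r) ℝ → ℝ)
    (hH : ∀ t W, H t W = ∑ i, ∑ k, W i k * (xi t i * hi t k + xj t i * hj t k))
    (hG : ∀ t W, G t W = ∑ i, ∑ k, W i k * (xi t i * gi t k + xj t i * gj t k))
    (hℓ : ∀ t W, ℓ t W = H t W - G t W + Real.sqrt (R t))
    (A : ℕ → Matrix (Fin d) (Fin r) ℝ)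
    (hA : ∀ t i k, A t i k = xi t i * (gi t k - hi t k) + xj t i * (gj t k - hj t k))
    (F C : ℝ) (hF : 0 < F) (hC : 0 < C)
    (hAb : ∀ t, 0 < ∑ i, ∑ k, (A t i k) ^ 2)
    (hAF : ∀ t, (∑ i, ∑ k, (A t i k) ^ 2) ≤ F ^ 2)
    (hCb : ∀ t, Real.sqrt (R t) / F ^ 2 ≤ C)
    (W : ℕ → Matrix (Fin d) (Fin r) ℝ)
    (τ : ℕ → ℝ)
    (hτ : ∀ t, τ t = min C (ℓ t (W t) / ∑ i, ∑ k, (A t i k) ^ 2))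
    (hupd : ∀ t, W (t + 1) = W t + τ t • A t)
    (hℓW : ∀ t, Real.sqrt (R t) ≤ ℓ t (W t))
    (U : Matrix (Fin d) (Fin r) ℝ) (hℓU : ∀ t, 0 ≤ ℓ t U) :
    ∀ n : ℕ,
      ∑ t ∈ Finset.range n, R t ≤
        F ^ 2 * ((∑ i, ∑ k, (U i k - W 0 i k) ^ 2)
          + 2 * C * ∑ t ∈ Finset.range n, ℓ t U) := by
  have hF2 : (0:ℝ) < F ^ 2 := pow_pos hF 2
  set D : ℕ → ℝ := fun t => ∑ i, ∑ k, (U i k - W t i k) ^ 2 with hD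
  have hD0 : ∀ n, 0 ≤ D n := fun n =>
    Finset.sum_nonneg fun i _ => Finset.sum_nonneg fun k _ => sq_nonneg _
  have key : ∀ t, R t / F ^ 2 - 2 * C * ℓ t U ≤ D t - D (t + 1) := by
    intro t
    -- inner product identity
    have hMA : ∀ M : Matrix (Fin d) (Fin r) ℝ,
        ∑ i, ∑ k, M i k * A t i k = G t M - H t M := by
      intro M
      rw [hG, hH, ← Finset.sum_sub_distrib]
      refine Finset.sum_congr rfl fun i _ => ?_
      rw [← Finset.sum_sub_distrib]
      refine Finset.sum_congr rfl fun k _ => ?_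
      rw [hA]; ring
    have hinner : ∑ i, ∑ k, (U i k - W t i k) * A t i k = ℓ t (W t) - ℓ t U := by
      have h3 : ∑ i, ∑ k, (U i k - W t i k) * A t i k
          = (∑ i, ∑ k, U i k * A t i k) - ∑ i, ∑ k, W t i k * A t i k := by
        rw [← Finset.sum_sub_distrib]
        refine Finset.sum_congr rfl fun i _ => ?_
        rw [← Finset.sum_sub_distrib]
        refine Finset.sum_congr rfl fun k _ => ?_
        ring
      rw [h3, hMA U, hMA (W t), hℓ, hℓ]; ring
    have hexp : D (t + 1) = D t - 2 * τ t * (ℓ t (W t) - ℓ t U)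
        + τ t ^ 2 * ∑ i, ∑ k, (A t i k) ^ 2 := by
      have hpt : ∀ i k, (U i k - W (t + 1) i k) ^ 2
          = (U i k - W t i k) ^ 2 - 2 * τ t * ((U i k - W t i k) * A t i k)
            + τ t ^ 2 * (A t i k) ^ 2 := by
        intro i k
        rw [hupd]
        simp only [Matrix.add_apply, Matrix.smul_apply, smul_eq_mul]
        ring
      have : D (t + 1) = ∑ i, ∑ k, ((U i k - W t i k) ^ 2
          - 2 * τ t * ((U i k - W t i k) * A t i k) + τ t ^ 2 * (A t i k) ^ 2) := by
        exact Finset.sum_congr rfl fun i _ => Finset.sum_congr rfl fun k _ => hpt i k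
      rw [this]
      simp only [Finset.sum_add_distrib, Finset.sum_sub_distrib, ← Finset.mul_sum]
      rw [hinner]
    set N := ∑ i, ∑ k, (A t i k) ^ 2 with hNdef
    have hN1 : 0 < N := hAb t
    have hN2 : N ≤ F ^ 2 := hAF t
    set sR := Real.sqrt (R t) with hsRdef
    have hsR0 : 0 ≤ sR := Real.sqrt_nonneg _
    have hsq : sR ^ 2 = R t := Real.sq_sqrt (hR t)
    have hlW : sR ≤ ℓ t (W t) := hℓW t
    have hlU : 0 ≤ ℓ t U := hℓU t
    have hτC : τ t ≤ C := by rw [hτ]; exact min_le_left _ _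
    have hτN : τ t * N ≤ ℓ t (W t) := by
      have := min_le_right C (ℓ t (W t) / N)
      rw [← hτ] at this
      exact (le_div_iff₀ hN1).mp this
    have hτlb : sR / F ^ 2 ≤ τ t := by
      rw [hτ]
      refine le_min (hCb t) ?_
      rw [div_le_div_iff₀ hF2 hN1]
      nlinarith [mul_le_mul hlW hN2 (le_of_lt hN1) (hsR0.trans hlW)]
    have hτ0 : 0 ≤ τ t := le_trans (by positivity) hτlb
    have hsle : sR ≤ τ t * F ^ 2 := (div_le_iff₀ hF2).mp hτlb
    have hA1 : R t ≤ τ t * ℓ t (W t) * F ^ 2 := by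
      nlinarith [mul_le_mul_of_nonneg_left hsle hsR0,
        mul_le_mul_of_nonneg_right hlW (mul_nonneg hτ0 hF2.le)]
    have hA2 : τ t ^ 2 * N ≤ τ t * ℓ t (W t) :=
      by nlinarith [mul_le_mul_of_nonneg_left hτN hτ0]
    have hA3 : τ t * ℓ t U ≤ C * ℓ t U :=
      mul_le_mul_of_nonneg_right hτC hlU
    rw [hexp]
    have hdiv : R t / F ^ 2 ≤ τ t * ℓ t (W t) := by
      rw [div_le_iff₀ hF2]; exact hA1
    linarith [hA2, hA3, hdiv]
  have tele : ∀ n, ∑ t ∈ Finset.range n, (R t / F ^ 2 - 2 * C * ℓ t U) ≤ D 0 - D n := by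
    intro n
    induction n with
    | zero => simp
    | succ m ih =>
      rw [Finset.sum_range_succ]
      have := key m
      linarith
  intro n
  have h1 := tele n
  have h2 := hD0 n
  rw [Finset.sum_sub_distrib, ← Finset.sum_div, ← Finset.mul_sum] at h1
  have h3 : (∑ t ∈ Finset.range n, R t) / F ^ 2
      ≤ D 0 + 2 * C * ∑ t ∈ Finset.range n, ℓ t U := by linarith
  rw [div_le_iff₀ hF2] at h3
  calc ∑ t ∈ Finset.range n, R t
      ≤ (D 0 + 2 * C * ∑ t ∈ Finset.range n, ℓ t U) * F ^ 2 := h3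
    _ = F ^ 2 * ((∑ i, ∑ k, (U i k - W 0 i k) ^ 2)
          + 2 * C * ∑ t ∈ Finset.range n, ℓ t U) := by rw [hD]; ring
end

section
/- Under the hypotheses of Theorem 1, if there exists a matrix Ũ with ℓ^t(Ũ) = 0 for all t, then the cumulative similarity loss satisfies Σ_{t=1}^∞ R^t ≤ F^2 ‖Ũ − W^1‖_F^2; in particular the cumulative loss is bounded by a constant independent of the number of rounds. -/
/-!
The prediction loss is affine, `ℓ^t(M) = √R^t - ⟨M, A^t⟩`, so `ℓ^t(Ũ) = 0` gives
`⟨Ũ - W^t, A^t⟩ = ℓ^t(W^t)`. Expanding the update then shows that the squared distance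
`‖Ũ - W^t‖²` drops by `τ (2ℓ - τ‖A‖²) ≥ τ ℓ ≥ (√R / F²) √R = R / F²` in every round, and the
partial sums telescope.
-/

open Finset

section FrobeniusExpansion

variable {m n : Type*} [Fintype m] [Fintype n]

lemma sum_sum_sq_sub_smul (M A : Matrix m n ℝ) (τ : ℝ) :
    ∑ i, ∑ k, (M - τ • A) i k ^ 2 =
      ∑ i, ∑ k, M i k ^ 2 - 2 * τ * ∑ i, ∑ k, M i k * A i k + τ ^ 2 * ∑ i, ∑ k, A i k ^ 2 := by
  simp only [mul_sum, ← sum_sub_distrib, ← sum_add_distrib, Matrix.sub_apply,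
    Matrix.smul_apply, smul_eq_mul]
  exact sum_congr rfl fun i _ => sum_congr rfl fun k _ => by ring

lemma sum_sum_sub_mul (M N A : Matrix m n ℝ) :
    ∑ i, ∑ k, (M - N) i k * A i k = ∑ i, ∑ k, M i k * A i k - ∑ i, ∑ k, N i k * A i k := by
  simp only [Matrix.sub_apply, sub_mul, sum_sub_distrib]

lemma hashLoss_sub_eq_neg_sum_sum_mul (xi xj : m → ℝ) (hi hj gi gj : n → ℝ) (A M : Matrix m n ℝ)
    (hA : ∀ i k, A i k = xi i * (gi k - hi k) + xj i * (gj k - hj k)) :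
    ∑ i, ∑ k, M i k * (xi i * hi k + xj i * hj k) - ∑ i, ∑ k, M i k * (xi i * gi k + xj i * gj k) =
      -∑ i, ∑ k, M i k * A i k := by
  simp only [← sum_sub_distrib, ← sum_neg_distrib, hA]
  exact sum_congr rfl fun i _ => sum_congr rfl fun k _ => by ring

end FrobeniusExpansion

lemma sq_le_mul_passiveAggressive_gain {C ℓ s ρ Fsq : ℝ} (hs : 0 < s) (hsF : s ≤ Fsq)
    (hρ : 0 ≤ ρ) (hρℓ : ρ ≤ ℓ) (hρC : ρ / Fsq ≤ C) :
    ρ ^ 2 ≤ Fsq * (2 * min C (ℓ / s) * ℓ - min C (ℓ / s) ^ 2 * s) := by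
  set τ := min C (ℓ / s)
  have hFsq : 0 < Fsq := hs.trans_le hsF
  have hτs : τ * s ≤ ℓ := (le_div_iff₀ hs).mp (min_le_right _ _)
  have hτ : ρ / Fsq ≤ τ :=
    le_min hρC ((div_le_div_of_nonneg_left hρ hs hsF).trans (by gcongr))
  have hρτ : ρ ≤ Fsq * τ := (div_le_iff₀' hFsq).mp hτ
  have hτ0 : 0 ≤ τ := (div_nonneg hρ hFsq.le).trans hτ
  calc ρ ^ 2 ≤ Fsq * τ * ℓ := by nlinarith
    _ ≤ Fsq * (2 * τ * ℓ - τ ^ 2 * s) := by nlinarith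

lemma sum_range_le_mul_of_le_mul_sub {a φ : ℕ → ℝ} {c : ℝ} (hc : 0 ≤ c)
    (hstep : ∀ t, a t ≤ c * (φ t - φ (t + 1))) (n : ℕ) (hφn : 0 ≤ φ n) :
    ∑ t ∈ range n, a t ≤ c * φ 0 :=
  calc ∑ t ∈ range n, a t ≤ ∑ t ∈ range n, c * (φ t - φ (t + 1)) := sum_le_sum fun t _ => hstep t
    _ = c * (φ 0 - φ n) := by rw [← mul_sum, sum_range_sub']
    _ ≤ c * φ 0 := by nlinarith

theorem stmt_10_general (d r : ℕ)
    (xi xj : ℕ → Fin d → ℝ) (hi hj gi gj : ℕ → Fin r → ℝ)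
    (R : ℕ → ℝ) (hR : ∀ t, 0 ≤ R t)
    (H G ℓ : ℕ → Matrix (Fin d) (Fin r) ℝ → ℝ)
    (hH : ∀ t W, H t W = ∑ i, ∑ k, W i k * (xi t i * hi t k + xj t i * hj t k))
    (hG : ∀ t W, G t W = ∑ i, ∑ k, W i k * (xi t i * gi t k + xj t i * gj t k))
    (hℓ : ∀ t W, ℓ t W = H t W - G t W + Real.sqrt (R t))
    (A : ℕ → Matrix (Fin d) (Fin r) ℝ)
    (hA : ∀ t i k, A t i k = xi t i * (gi t k - hi t k) + xj t i * (gj t k - hj t k))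
    (F C : ℝ)
    (hAb : ∀ t, 0 < ∑ i, ∑ k, (A t i k) ^ 2)
    (hAF : ∀ t, (∑ i, ∑ k, (A t i k) ^ 2) ≤ F ^ 2)
    (hCb : ∀ t, Real.sqrt (R t) / F ^ 2 ≤ C)
    (W : ℕ → Matrix (Fin d) (Fin r) ℝ)
    (τ : ℕ → ℝ)
    (hτ : ∀ t, τ t = min C (ℓ t (W t) / ∑ i, ∑ k, (A t i k) ^ 2))
    (hupd : ∀ t, W (t + 1) = W t + τ t • A t)
    (hℓW : ∀ t, Real.sqrt (R t) ≤ ℓ t (W t))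
    (Utilde : Matrix (Fin d) (Fin r) ℝ) (hU0 : ∀ t, ℓ t Utilde = 0) :
    ∀ n : ℕ,
      ∑ t ∈ Finset.range n, R t ≤
        F ^ 2 * ∑ i, ∑ k, (Utilde i k - W 0 i k) ^ 2 := by
  have hℓ_affine : ∀ t M, ℓ t M = Real.sqrt (R t) - ∑ i, ∑ k, M i k * A t i k := fun t M => by
    rw [hℓ, hH, hG, hashLoss_sub_eq_neg_sum_sum_mul _ _ _ _ _ _ _ _ (hA t)]; ring
  have hinner : ∀ t, ∑ i, ∑ k, (Utilde - W t) i k * A t i k = ℓ t (W t) := fun t => by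
    have := hU0 t
    rw [hℓ_affine] at this
    rw [sum_sum_sub_mul, hℓ_affine]; linarith
  set φ : ℕ → ℝ := fun t => ∑ i, ∑ k, (Utilde - W t) i k ^ 2
  have hstep : ∀ t, R t ≤ F ^ 2 * (φ t - φ (t + 1)) := fun t => by
    have hW : Utilde - W (t + 1) = (Utilde - W t) - τ t • A t := by rw [hupd]; abel
    have hgain := sq_le_mul_passiveAggressive_gain (hAb t) (hAF t) (Real.sqrt_nonneg _)
      (hℓW t) (hCb t)
    rw [Real.sq_sqrt (hR t), ← hτ] at hgain
    simp only [φ, hW, sum_sum_sq_sub_smul, hinner]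
    linarith
  intro n
  simpa only [φ, Matrix.sub_apply] using sum_range_le_mul_of_le_mul_sub (sq_nonneg F) hstep n
    (sum_nonneg fun i _ => sum_nonneg fun k _ => sq_nonneg _)

/-- Under the hypotheses of Theorem 1, if there exists a
comparator `Ũ` with `ℓ^t(Ũ) = 0` for all `t`, then every partial sum of the
cumulative similarity loss is bounded by the constant `F²‖Ũ − W^1‖_F²`,
independent of the number of rounds. -/
theorem stmt_10 (d r : ℕ)
    (xi xj : ℕ → Fin d → ℝ) (hi hj gi gj : ℕ → Fin r → ℝ)
    (R : ℕ → ℝ) (hR : ∀ t, 0 ≤ R t)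
    (H G ℓ : ℕ → Matrix (Fin d) (Fin r) ℝ → ℝ)
    (hH : ∀ t W, H t W = ∑ i, ∑ k, W i k * (xi t i * hi t k + xj t i * hj t k))
    (hG : ∀ t W, G t W = ∑ i, ∑ k, W i k * (xi t i * gi t k + xj t i * gj t k))
    (hℓ : ∀ t W, ℓ t W = H t W - G t W + Real.sqrt (R t))
    (A : ℕ → Matrix (Fin d) (Fin r) ℝ)
    (hA : ∀ t i k, A t i k = xi t i * (gi t k - hi t k) + xj t i * (gj t k - hj t k))
    (F C : ℝ) (hF : 0 < F) (hC : 0 < C)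
    (hAb : ∀ t, 0 < ∑ i, ∑ k, (A t i k) ^ 2)
    (hAF : ∀ t, (∑ i, ∑ k, (A t i k) ^ 2) ≤ F ^ 2)
    (hCb : ∀ t, Real.sqrt (R t) / F ^ 2 ≤ C)
    (W : ℕ → Matrix (Fin d) (Fin r) ℝ)
    (τ : ℕ → ℝ)
    (hτ : ∀ t, τ t = min C (ℓ t (W t) / ∑ i, ∑ k, (A t i k) ^ 2))
    (hupd : ∀ t, W (t + 1) = W t + τ t • A t)
    (hℓW : ∀ t, Real.sqrt (R t) ≤ ℓ t (W t))
    (Utilde : Matrix (Fin d) (Fin r) ℝ) (hU0 : ∀ t, ℓ t Utilde = 0) :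
    ∀ n : ℕ,
      ∑ t ∈ Finset.range n, R t ≤
        F ^ 2 * ∑ i, ∑ k, (Utilde i k - W 0 i k) ^ 2 :=
  stmt_10_general d r xi xj hi hj gi gj R hR H G ℓ hH hG hℓ A hA F C hAb hAF hCb W τ hτ hupd hℓW
    Utilde hU0
end
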